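/- (Macdonald/Mehta integral for B_n at γ = 1) (2π)^{-n/2} ∫_{ℝ^n} ∏_{i=1}^n (2x_i²) · ∏_{1≤i<j≤n} (x_i² - x_j²)² · exp(-∑_{k=1}^n x_k²/2) dx = ∏_{j=1}^n (2j)! . -/

import Mathlib

/-!
Since `hermite (2j+1) = X · q_j(X²)` with `q_j` monic of degree `j`, column operations turn the
Vandermonde determinant in the `x_i²` into
`det [He_{2j+1}(x_i)] = ∏ x_i · ∏_{i<j} (x_j² - x_i²)`,
so the integrand is `det [He_{2j+1}(x_i)] · det [2 e^{-x_i²/2} He_{2j+1}(x_i)]`. Andréief's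
identity integrates such a product of determinants to `n!` times the determinant of the Gram
matrix `∫ He_{2j+1} He_{2k+1} · 2 e^{-x²/2}`, which by orthogonality of the Hermite polynomials
is diagonal with entries `2 (2j+1)! √(2π)`.
-/

open Finset Real MeasureTheory Polynomial Equiv
open scoped Nat

section Andreief

variable {ι : Type*} [Fintype ι] [DecidableEq ι]

theorem Matrix.det_eq_sum_perm_sign_mul_prod {R : Type*} [CommRing R] (A : Matrix ι ι R) :
    A.det = ∑ σ : Perm ι, ((Perm.sign σ : ℤ) : R) * ∏ i, A i (σ i) := by
  rw [← Matrix.det_transpose, Matrix.det_apply']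
  rfl

theorem Matrix.sum_perm_sum_perm_sign_mul_sign_mul_prod {R : Type*} [CommRing R]
    (G : Matrix ι ι R) :
    ∑ σ : Perm ι, ∑ τ : Perm ι,
        ((Perm.sign σ : ℤ) : R) * (Perm.sign τ : ℤ) * ∏ i, G (σ i) (τ i) =
      ((Fintype.card ι)! : R) * G.det := by
  have inner (σ : Perm ι) :
      ∑ τ : Perm ι, ((Perm.sign σ : ℤ) : R) * (Perm.sign τ : ℤ) * ∏ i, G (σ i) (τ i) =
        G.det := by
    rw [G.det_eq_sum_perm_sign_mul_prod, ← Equiv.sum_comp (Equiv.mulRight σ)]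
    refine sum_congr rfl fun ρ _ => ?_
    have hsign :
        ((Perm.sign σ : ℤ) : R) * (Perm.sign (ρ * σ) : ℤ) = (Perm.sign ρ : ℤ) := by
      rw [← Int.cast_mul, ← Units.val_mul, Perm.sign_mul, mul_left_comm, Int.units_mul_self,
        mul_one]
    rw [coe_mulRight, hsign, ← Equiv.prod_comp σ (fun k => G k (ρ k))]
    simp
  simp [inner, Fintype.card_perm]

variable {α : Type*} [MeasurableSpace α] (μ : Measure α) [SigmaFinite μ]

/-- Andréief's identity. -/
theorem integral_det_mul_det (f g : ι → α → ℝ)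
    (hfg : ∀ j k, Integrable (fun x => f j x * g k x) μ) :
    ∫ x : ι → α, (Matrix.of fun i j => f j (x i)).det * (Matrix.of fun i j => g j (x i)).det
        ∂(Measure.pi fun _ => μ) =
      ((Fintype.card ι)! : ℝ) * (Matrix.of fun j k => ∫ x, f j x * g k x ∂μ).det := by
  have hexpand (x : ι → α) :
      (Matrix.of fun i j => f j (x i)).det * (Matrix.of fun i j => g j (x i)).det =
        ∑ σ : Perm ι, ∑ τ : Perm ι, ((Perm.sign σ : ℤ) : ℝ) * (Perm.sign τ : ℤ) *
          ∏ i, f (σ i) (x i) * g (τ i) (x i) := by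
    simp only [Matrix.det_eq_sum_perm_sign_mul_prod, Matrix.of_apply, sum_mul_sum,
      prod_mul_distrib]
    exact sum_congr rfl fun σ _ => sum_congr rfl fun τ _ => by ring
  have hint (σ τ : Perm ι) : Integrable
      (fun x : ι → α => ∏ i, f (σ i) (x i) * g (τ i) (x i)) (Measure.pi fun _ => μ) :=
    Integrable.fintype_prod fun i => hfg (σ i) (τ i)
  simp_rw [hexpand]
  rw [integral_finsetSum _ fun σ _ => integrable_finsetSum _ fun τ _ => (hint σ τ).const_mul _,
    ← Matrix.sum_perm_sum_perm_sign_mul_sign_mul_prod]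
  refine sum_congr rfl fun σ _ => ?_
  rw [integral_finsetSum _ fun τ _ => (hint σ τ).const_mul _]
  refine sum_congr rfl fun τ _ => ?_
  rw [integral_const_mul, integral_fintype_prod_eq_prod (fun i y => f (σ i) y * g (τ i) y)]
  rfl

end Andreief

theorem integral_gaussian_half : ∫ x : ℝ, exp (-(x ^ 2 / 2)) = √(2 * π) := by
  simpa [neg_div, div_eq_inv_mul, ← neg_mul] using integral_gaussian (1 / 2)

theorem integrable_pow_mul_gaussian (k : ℕ) :
    Integrable fun x : ℝ => x ^ k * exp (-(x ^ 2 / 2)) := by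
  have h := integrable_rpow_mul_exp_neg_mul_sq (b := 1 / 2) (by norm_num)
    (s := k) (by linarith [(Nat.cast_nonneg k : (0 : ℝ) ≤ k)])
  simp only [rpow_natCast] at h
  refine h.congr (ae_of_all _ fun x => ?_)
  ring_nf

theorem integrable_eval_mul_gaussian (P : ℝ[X]) :
    Integrable fun x : ℝ => P.eval x * exp (-(x ^ 2 / 2)) := by
  simp_rw [eval_eq_sum_range, sum_mul, mul_assoc]
  exact integrable_finsetSum _ fun k _ => (integrable_pow_mul_gaussian k).const_mul _

theorem integrable_eval_mul_iterate_deriv_gaussian (P : ℝ[X]) (b : ℕ) :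
    Integrable fun x : ℝ => P.eval x * deriv^[b] (fun y => exp (-(y ^ 2 / 2))) x := by
  convert integrable_eval_mul_gaussian (P * C ((-1) ^ b) * (hermite b).map (algebraMap ℤ ℝ))
    using 2 with x
  rw [deriv_gaussian_eq_hermite_mul_gaussian, eval_mul, eval_mul, eval_C, eval_map_algebraMap]
  ring

theorem integral_eval_mul_iterate_deriv_gaussian (P : ℝ[X]) (b : ℕ) :
    ∫ x : ℝ, P.eval x * deriv^[b] (fun y => exp (-(y ^ 2 / 2))) x =
      (-1) ^ b * ∫ x : ℝ, (derivative^[b] P).eval x * exp (-(x ^ 2 / 2)) := by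
  induction b generalizing P with
  | zero => simp
  | succ b ih =>
    have hderiv (x : ℝ) : HasDerivAt (deriv^[b] fun y => exp (-(y ^ 2 / 2)))
        (deriv^[b + 1] (fun y => exp (-(y ^ 2 / 2))) x) x := by
      rw [Function.iterate_succ_apply']
      refine DifferentiableAt.hasDerivAt ?_
      simp_rw [funext (deriv_gaussian_eq_hermite_mul_gaussian b)]
      have := (hermite b).differentiable_aeval (𝕜 := ℝ)
      fun_prop
    rw [integral_mul_deriv_eq_deriv_mul_of_integrable (fun x _ => P.hasDerivAt x)
        (fun x _ => hderiv x) (integrable_eval_mul_iterate_deriv_gaussian P (b + 1))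
        (integrable_eval_mul_iterate_deriv_gaussian _ b)
        (integrable_eval_mul_iterate_deriv_gaussian P b),
      ih, Function.iterate_succ_apply, pow_succ]
    ring

theorem integral_eval_mul_hermite_mul_gaussian (P : ℝ[X]) (b : ℕ) :
    ∫ x : ℝ, P.eval x * aeval x (hermite b) * exp (-(x ^ 2 / 2)) =
      ∫ x : ℝ, (derivative^[b] P).eval x * exp (-(x ^ 2 / 2)) := by
  have hsign : ((-1 : ℝ) ^ b) * (-1) ^ b = 1 := by rw [← mul_pow]; norm_num
  have hrodrigues (x : ℝ) : P.eval x * aeval x (hermite b) * exp (-(x ^ 2 / 2)) =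
      (-1) ^ b * (P.eval x * deriv^[b] (fun y => exp (-(y ^ 2 / 2))) x) := by
    rw [deriv_gaussian_eq_hermite_mul_gaussian]
    linear_combination (-(P.eval x * aeval x (hermite b) * exp (-(x ^ 2 / 2)))) * hsign
  simp_rw [hrodrigues, integral_const_mul, integral_eval_mul_iterate_deriv_gaussian, ← mul_assoc,
    hsign, one_mul]

theorem Polynomial.iterate_derivative_eq_C_factorial_mul_leadingCoeff {R : Type*} [CommRing R]
    {P : R[X]} {n : ℕ} (hP : P.natDegree = n) : derivative^[n] P = C (n ! * P.leadingCoeff) := by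
  rw [eq_C_of_natDegree_le_zero ((natDegree_iterate_derivative P n).trans (by omega)),
    coeff_iterate_derivative, zero_add, Nat.descFactorial_self, nsmul_eq_mul, leadingCoeff, hP]

theorem integral_hermite_mul_hermite_mul_gaussian_of_le {a b : ℕ} (hab : a ≤ b) :
    ∫ x : ℝ, aeval x (hermite a) * aeval x (hermite b) * exp (-(x ^ 2 / 2)) =
      if a = b then a ! * √(2 * π) else 0 := by
  simp_rw [← eval_map_algebraMap (hermite a), integral_eval_mul_hermite_mul_gaussian,
    iterate_derivative_map]
  split_ifs with h
  · subst h
    rw [iterate_derivative_eq_C_factorial_mul_leadingCoeff natDegree_hermite, leadingCoeff_hermite]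
    simp [integral_const_mul, integral_gaussian_half]
  · rw [iterate_derivative_eq_zero (natDegree_hermite.trans_lt (lt_of_le_of_ne hab h))]
    simp

theorem integral_hermite_mul_hermite_mul_gaussian (a b : ℕ) :
    ∫ x : ℝ, aeval x (hermite a) * aeval x (hermite b) * exp (-(x ^ 2 / 2)) =
      if a = b then a ! * √(2 * π) else 0 := by
  rcases le_total a b with hab | hba
  · exact integral_hermite_mul_hermite_mul_gaussian_of_le hab
  · simp_rw [mul_comm (aeval _ (hermite a)), eq_comm (a := a)]
    rw [integral_hermite_mul_hermite_mul_gaussian_of_le hba]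
    split_ifs with h <;> simp [h]

theorem Polynomial.X_mul_expand_two_contract_divX {R : Type*} [CommSemiring R] {f : R[X]}
    (hf : ∀ m, Even m → f.coeff m = 0) : X * expand R 2 (contract 2 f.divX) = f := by
  ext (_ | m)
  · simpa using (hf 0 ⟨0, rfl⟩).symm
  · rw [coeff_X_mul, coeff_expand two_pos, coeff_contract two_ne_zero, coeff_divX]
    split_ifs with hm
    · rw [Nat.div_mul_cancel hm]
    · exact (hf (m + 1) (by rw [Nat.even_add_one, even_iff_two_dvd]; exact hm)).symm

/-- The polynomial `q` with `hermite (2 * k + 1) = X * q(X ^ 2)`. -/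
noncomputable def reducedOddHermite (k : ℕ) : ℤ[X] := contract 2 (hermite (2 * k + 1)).divX

theorem X_mul_expand_reducedOddHermite (k : ℕ) :
    X * expand ℤ 2 (reducedOddHermite k) = hermite (2 * k + 1) :=
  X_mul_expand_two_contract_divX fun m hm => coeff_hermite_of_odd_add <| by
    rw [add_assoc, add_comm 1]
    exact Even.add_odd ⟨k, by ring⟩ hm.add_one

theorem reducedOddHermite_monic (k : ℕ) : (reducedOddHermite k).Monic := by
  have h := congrArg leadingCoeff (X_mul_expand_reducedOddHermite k)
  rwa [leadingCoeff_mul, leadingCoeff_X, one_mul, leadingCoeff_expand two_pos,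
    leadingCoeff_hermite] at h

theorem natDegree_reducedOddHermite (k : ℕ) : (reducedOddHermite k).natDegree = k := by
  have h := congrArg natDegree (X_mul_expand_reducedOddHermite k)
  rw [natDegree_mul X_ne_zero ((reducedOddHermite_monic k).expand two_pos).ne_zero,
    natDegree_X, natDegree_expand, natDegree_hermite] at h
  omega

theorem aeval_hermite_two_mul_add_one (k : ℕ) (x : ℝ) :
    aeval x (hermite (2 * k + 1)) = x * aeval (x ^ 2) (reducedOddHermite k) := by
  rw [← X_mul_expand_reducedOddHermite, map_mul, aeval_X, expand_aeval]

theorem det_aeval_hermite_two_mul_add_one {n : ℕ} (x : Fin n → ℝ) :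
    (Matrix.of fun i j : Fin n => aeval (x i) (hermite (2 * j + 1))).det =
      (∏ i, x i) * (Matrix.vandermonde fun i => x i ^ 2).det := by
  rw [Matrix.det_eval_matrixOfPolynomials_eq_det_vandermonde _
    (fun j => (reducedOddHermite j).map (algebraMap ℤ ℝ))
    (fun j => ((reducedOddHermite_monic j).natDegree_map _).trans (natDegree_reducedOddHermite j))
    (fun j => (reducedOddHermite_monic j).map _), ← Matrix.det_mul_column]
  congr with i j
  simp only [Matrix.of_apply, aeval_hermite_two_mul_add_one, eval_map_algebraMap]

theorem prod_filter_lt_sub_sq_eq_det_vandermonde_sq {R : Type*} [CommRing R] {n : ℕ}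
    (v : Fin n → R) :
    ∏ p ∈ univ.filter (fun p : Fin n × Fin n => p.1 < p.2), (v p.1 - v p.2) ^ 2 =
      (Matrix.vandermonde v).det ^ 2 := by
  rw [Matrix.det_vandermonde, ← prod_pow, prod_filter, Fintype.prod_prod_type]
  refine prod_congr rfl fun i _ => ?_
  rw [← prod_pow, ← filter_lt_eq_Ioi, prod_filter]
  exact prod_congr rfl fun j _ => by split_ifs <;> ring

theorem factorial_mul_prod_two_mul_factorial (n : ℕ) :
    n ! * ∏ j ∈ range n, 2 * (2 * j + 1)! = ∏ j ∈ range n, (2 * (j + 1))! := by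
  rw [← prod_range_add_one_eq_factorial, ← prod_mul_distrib]
  refine prod_congr rfl fun j _ => ?_
  rw [show 2 * (j + 1) = 2 * j + 1 + 1 by ring, Nat.factorial_succ (2 * j + 1)]
  ring

theorem two_pi_rpow_neg_half_mul_sqrt_two_pi_pow (n : ℕ) :
    (2 * π) ^ (-(n : ℝ) / 2) * √(2 * π) ^ n = 1 := by
  rw [sqrt_eq_rpow, ← rpow_natCast, ← rpow_mul two_pi_pos.le, ← rpow_add two_pi_pos,
    show -(n : ℝ) / 2 + 1 / 2 * n = 0 by ring, rpow_zero]

section MacdonaldMehta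

variable {n : ℕ}

theorem macdonald_integrand_eq_det_mul_det (x : Fin n → ℝ) :
    (∏ i, 2 * (x i) ^ 2) *
        (∏ p ∈ univ.filter (fun p : Fin n × Fin n => p.1 < p.2),
          ((x p.1) ^ 2 - (x p.2) ^ 2) ^ 2) *
        exp (-(∑ k, (x k) ^ 2) / 2) =
      (Matrix.of fun i j : Fin n => aeval (x i) (hermite (2 * j + 1))).det *
        (Matrix.of fun i j : Fin n =>
          2 * exp (-(x i ^ 2 / 2)) * aeval (x i) (hermite (2 * j + 1))).det := by
  have hscale := Matrix.det_mul_column (fun i => 2 * exp (-(x i ^ 2 / 2)))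
    (Matrix.of fun i j : Fin n => aeval (x i) (hermite (2 * j + 1)))
  simp only [Matrix.of_apply] at hscale
  rw [prod_filter_lt_sub_sq_eq_det_vandermonde_sq (fun i => x i ^ 2), hscale,
    det_aeval_hermite_two_mul_add_one, neg_div, sum_div, ← sum_neg_distrib, exp_sum]
  simp only [prod_mul_distrib, pow_two]
  ring

theorem integrable_hermite_mul_two_gaussian_mul_hermite (a b : ℕ) :
    Integrable fun x : ℝ =>
      aeval x (hermite a) * (2 * exp (-(x ^ 2 / 2)) * aeval x (hermite b)) := by
  convert integrable_eval_mul_gaussian ((C 2 * hermite a * hermite b).map (algebraMap ℤ ℝ))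
    using 2 with x
  simp only [eval_map_algebraMap, map_mul, map_ofNat]
  ring

theorem gram_hermite_odd_eq_diagonal :
    (Matrix.of fun j k : Fin n => ∫ x : ℝ, aeval x (hermite (2 * j + 1)) *
      (2 * exp (-(x ^ 2 / 2)) * aeval x (hermite (2 * k + 1)))) =
      Matrix.diagonal fun j : Fin n => 2 * ((2 * j + 1)! : ℝ) * √(2 * π) := by
  ext j k
  have hrw (a b e : ℝ) : a * (2 * e * b) = 2 * (a * b * e) := by ring
  simp_rw [Matrix.of_apply, Matrix.diagonal_apply, hrw, integral_const_mul,
    integral_hermite_mul_hermite_mul_gaussian, add_left_inj, mul_right_inj' two_ne_zero,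
    Fin.val_inj]
  split_ifs <;> ring

end MacdonaldMehta

/-- Macdonald/Mehta integral for the root system `B_n` at `γ = 1`:
`(2π)^{-n/2} ∫_{ℝⁿ} ∏_i (2x_i²) ∏_{i<j} (x_i² - x_j²)² e^{-∑ x_k²/2} dx = ∏_{j=1}^n (2j)!`. -/
theorem macdonald_mehta_Bn_gamma_one (n : ℕ) :
    (2 * π) ^ (-(n : ℝ) / 2) *
      ∫ x : Fin n → ℝ,
        (∏ i, 2 * (x i) ^ 2) *
        (∏ p ∈ univ.filter (fun p : Fin n × Fin n => p.1 < p.2),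
          ((x p.1) ^ 2 - (x p.2) ^ 2) ^ 2) *
        Real.exp (-(∑ k, (x k) ^ 2) / 2)
    = ∏ j ∈ range n, ((2 * (j + 1)).factorial : ℝ) := by
  simp_rw [macdonald_integrand_eq_det_mul_det]
  rw [volume_pi, integral_det_mul_det volume _ _ fun j k : Fin n =>
      integrable_hermite_mul_two_gaussian_mul_hermite (2 * j + 1) (2 * k + 1),
    gram_hermite_odd_eq_diagonal, Matrix.det_diagonal, Fintype.card_fin, prod_mul_distrib,
    prod_const, card_fin, Fin.prod_univ_eq_prod_range (fun j => 2 * ((2 * j + 1)! : ℝ)),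
    ← Nat.cast_prod, ← factorial_mul_prod_two_mul_factorial]
  push_cast
  linear_combination ((n ! : ℝ) * ∏ j ∈ range n, 2 * ((2 * j + 1)! : ℝ)) *
    two_pi_rpow_neg_half_mul_sqrt_two_pi_pow n
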